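/- 232250619601 is a Carmichael number with exactly 8 distinct prime factors, and it is the smallest such: every Carmichael number with exactly 8 distinct prime factors is at least 232250619601. -/

import Mathlib

/-!
Korselt's criterion: `N > 1` is a Carmichael number iff it is composite, squarefree and
`p - 1 ∣ N - 1` for every prime `p ∣ N`. Via Mathlib's Carmichael function `λ` (the exponent of
`(ZMod N)ˣ`) this is `λ N ∣ N - 1`, and `λ` of a squarefree number is the lcm of the `p - 1`.
This certifies `232250619601 = 7 · 11 · 13 · 17 · 31 · 37 · 73 · 163` directly.

For minimality, a Korselt number with eight prime factors is odd, and a finite search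
enumerates the increasing sequences of odd primes `q₁ < q₂ < ⋯` whose product stays below the
bound. A prefix with product `P` and `λ = lcm (qᵢ - 1)` is discarded unless `P` and `λ` are
coprime (since `P ∣ N` and `λ ∣ N - 1`), and the last prime `q` is confined to the arithmetic
progression `P q ≡ 1 (mod λ)`, which makes the final scan short.
-/

/-- A Carmichael number: a composite natural number `N` such that
`b ^ (N - 1) ≡ 1 [MOD N]` for every `b` coprime to `N`. -/
def IsCarmichael (N : ℕ) : Prop :=
  1 < N ∧ ¬ N.Prime ∧ ∀ b : ℕ, Nat.Coprime b N → b ^ (N - 1) ≡ 1 [MOD N]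

open Finset ArithmeticFunction

theorem carmichael_dvd_iff_forall_coprime_pow_modEq_one {n m : ℕ} (hn : n ≠ 0) :
    carmichael n ∣ m ↔ ∀ b, b.Coprime n → b ^ m ≡ 1 [MOD n] := by
  have : NeZero n := ⟨hn⟩
  rw [carmichael_eq_exponent hn, Monoid.exponent_dvd_iff_forall_pow_eq_one]
  refine ⟨fun h b hb => ?_, fun h u => ?_⟩
  · simpa [← ZMod.natCast_eq_natCast_iff] using congr_arg Units.val (h (ZMod.unitOfCoprime b hb))
  · have := (ZMod.natCast_eq_natCast_iff _ _ _).mpr (h _ (ZMod.val_coe_unit_coprime u))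
    ext
    simpa using this

theorem carmichael_prime {p : ℕ} (hp : p.Prime) : carmichael p = p - 1 := by
  have : Fact p.Prime := ⟨hp⟩
  rw [carmichael_eq_exponent hp.ne_zero, IsCyclic.exponent_eq_card, Nat.card_eq_fintype_card,
    ZMod.card_units]

theorem Nat.Prime.dvd_carmichael_sq {p : ℕ} (hp : p.Prime) : p ∣ carmichael (p ^ 2) := by
  rcases eq_or_ne p 2 with rfl | hp2
  · rw [carmichael_two_pow_of_le_two le_rfl]
    norm_num
  · rw [carmichael_pow_of_prime_ne_two 2 hp hp2, Nat.totient_prime_pow hp two_pos]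
    exact dvd_mul_of_dvd_left (dvd_pow_self p one_ne_zero) _

theorem carmichael_dvd_iff_squarefree {n m : ℕ} (hnm : n.Coprime m) :
    carmichael n ∣ m ↔ Squarefree n ∧ ∀ p ∈ n.primeFactors, p - 1 ∣ m := by
  constructor
  · intro h
    refine ⟨Nat.squarefree_iff_prime_squarefree.mpr fun p hp hpp => ?_, fun p hp => ?_⟩
    · have hpm : p ∣ m := hp.dvd_carmichael_sq.trans <| (carmichael_dvd (by rwa [sq])).trans h
      exact hp.not_dvd_one <| hnm ▸ Nat.dvd_gcd ((Dvd.intro _ rfl).trans hpp) hpm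
    · rw [← carmichael_prime (Nat.prime_of_mem_primeFactors hp)]
      exact (carmichael_dvd (Nat.dvd_of_mem_primeFactors hp)).trans h
  · rintro ⟨hsq, hdvd⟩
    have hprod : n = n.primeFactors.prod id := (Nat.prod_primeFactors_of_squarefree hsq).symm
    rw [hprod, carmichael_finsetProd]
    · refine Finset.lcm_dvd fun p hp => ?_
      simpa [carmichael_prime (Nat.prime_of_mem_primeFactors hp)] using hdvd p hp
    · exact fun p hp q hq hpq => (Nat.coprime_primes (Nat.prime_of_mem_primeFactors hp)
        (Nat.prime_of_mem_primeFactors hq)).mpr hpq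

theorem isCarmichael_iff_korselt {N : ℕ} : IsCarmichael N ↔
    1 < N ∧ ¬ N.Prime ∧ Squarefree N ∧ ∀ p ∈ N.primeFactors, p - 1 ∣ N - 1 := by
  refine and_congr_right fun hN => and_congr_right fun _ => ?_
  have hcop : N.Coprime (N - 1) :=
    (Nat.coprime_self_sub_right hN.le).mpr (Nat.coprime_one_right N)
  rw [← carmichael_dvd_iff_forall_coprime_pow_modEq_one (by omega),
    carmichael_dvd_iff_squarefree hcop]

namespace KorseltSearch

-- Out of fuel this answers `true`; the search only relies on `isOddPrime p = true` for odd primes.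
def noOddDivisorFrom : ℕ → ℕ → ℕ → Bool
  | 0, _, _ => true
  | fuel + 1, d, n => n < d * d || (n % d != 0 && noOddDivisorFrom fuel (d + 2) n)

def isOddPrime (n : ℕ) : Bool := 2 < n && n % 2 == 1 && noOddDivisorFrom n 3 n

def noKorseltPrimeInProgression (P step : ℕ) : ℕ → ℕ → ℕ → Bool
  | 0, _, _ => false
  | fuel + 1, x, hi =>
    hi < x || (!(isOddPrime x && (P * x - 1) % (x - 1) == 0) &&
      noKorseltPrimeInProgression P step fuel (x + step) hi)

def noKorseltLastPrime (P lam : ℕ) : ℕ → ℕ → ℕ → Bool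
  | 0, _, _ => false
  | fuel + 1, x, hi =>
    hi < x ||
      if P * x ≡ 1 [MOD lam] then noKorseltPrimeInProgression P lam fuel x hi
      else noKorseltLastPrime P lam fuel (x + 2) hi

/-- `P` is the product of the primes chosen so far, `lam` the lcm of their `q - 1`, `p` the next
odd candidate and `k` the number of primes still to choose. -/
def search (B : ℕ) : ℕ → ℕ → ℕ → ℕ → ℕ → Bool
  | 0, _, _, _, _ => false
  | fuel + 1, k, p, P, lam =>
    if k = 1 then noKorseltLastPrime P lam fuel p ((B - 1) / P)
    else B ≤ P * p ^ k ||
      (!(isOddPrime p && Nat.gcd (P * p) (Nat.lcm lam (p - 1)) == 1) ||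
          search B fuel (k - 1) (p + 2) (P * p) (Nat.lcm lam (p - 1))) &&
        search B fuel k (p + 2) P lam

theorem noOddDivisorFrom_eq_true {n : ℕ} : ∀ {fuel d : ℕ}, Odd d →
    (∀ m, d ≤ m → Odd m → m * m ≤ n → ¬ m ∣ n) → noOddDivisorFrom fuel d n = true
  | 0, _, _, _ => rfl
  | fuel + 1, d, hd, h => by
    have hd2 : Odd (d + 2) := hd.add_even even_two
    simp only [noOddDivisorFrom, Bool.or_eq_true, decide_eq_true_eq, Bool.and_eq_true,
      bne_iff_ne, ne_eq]
    by_cases hn : n < d * d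
    · exact .inl hn
    · exact .inr ⟨fun hdn => h d le_rfl hd (by omega) (Nat.dvd_of_mod_eq_zero hdn),
        noOddDivisorFrom_eq_true hd2 fun m hm => h m (by omega)⟩

theorem isOddPrime_eq_true {p : ℕ} (hp : p.Prime) (hodd : Odd p) : isOddPrime p = true := by
  have hp2 := Nat.odd_iff.mp hodd
  have := hp.two_le
  simp only [isOddPrime, Bool.and_eq_true, decide_eq_true_eq, beq_iff_eq, hp2]
  refine ⟨⟨by omega, trivial⟩, noOddDivisorFrom_eq_true (by decide) fun m hm _ hmm hmp => ?_⟩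
  rcases hp.eq_one_or_self_of_dvd m hmp with rfl | rfl <;> nlinarith

theorem noKorseltPrimeInProgression_sound {P step q : ℕ} (hq : q.Prime) (hq2 : Odd q)
    (hqP : q - 1 ∣ P * q - 1) : ∀ {fuel x hi : ℕ},
    noKorseltPrimeInProgression P step fuel x hi = true → x ≤ q → q ≤ hi → step ∣ q - x → False
  | 0, _, _, h, _, _, _ => Bool.false_ne_true h
  | fuel + 1, x, hi, h, hxq, hqhi, hstep => by
    simp only [noKorseltPrimeInProgression, Bool.or_eq_true, decide_eq_true_eq,
      Bool.and_eq_true, Bool.not_eq_true'] at h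
    rcases h with hhi | ⟨hx, hrest⟩
    · omega
    rcases hxq.eq_or_lt with rfl | hlt
    · simp [isOddPrime_eq_true hq hq2, Nat.mod_eq_zero_of_dvd hqP] at hx
    · have := Nat.le_of_dvd (by omega) hstep
      refine noKorseltPrimeInProgression_sound hq hq2 hqP hrest (by omega) hqhi ?_
      rw [Nat.sub_add_eq]
      exact Nat.dvd_sub hstep dvd_rfl

theorem noKorseltLastPrime_sound {P lam q : ℕ} (hPlam : P.Coprime lam) (hq : q.Prime)
    (hq2 : Odd q) (hqlam : P * q ≡ 1 [MOD lam]) (hqP : q - 1 ∣ P * q - 1) : ∀ {fuel x hi : ℕ},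
    noKorseltLastPrime P lam fuel x hi = true → Odd x → x ≤ q → q ≤ hi → False
  | 0, _, _, h, _, _, _ => Bool.false_ne_true h
  | fuel + 1, x, hi, h, hx, hxq, hqhi => by
    simp only [noKorseltLastPrime, Bool.or_eq_true, decide_eq_true_eq] at h
    rcases h with hhi | h
    · omega
    split_ifs at h with hPx
    · have hxq' : x ≡ q [MOD lam] :=
        Nat.ModEq.cancel_left_of_coprime hPlam.symm (hPx.trans hqlam.symm)
      exact noKorseltPrimeInProgression_sound hq hq2 hqP h hxq hqhi
        ((Nat.modEq_iff_dvd' hxq).mp hxq')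
    · have hne : x ≠ q := by rintro rfl; exact hPx hqlam
      have := Nat.odd_iff.mp hx
      have := Nat.odd_iff.mp hq2
      exact noKorseltLastPrime_sound hPlam hq hq2 hqlam hqP h (hx.add_even even_two) (by omega)
        hqhi

theorem primeFactors_filter_add_two_le {N p : ℕ} (hN : Odd N) (hp : Odd p) :
    {q ∈ N.primeFactors | p + 2 ≤ q} = {q ∈ N.primeFactors | p ≤ q}.erase p := by
  have key : ∀ q ∈ N.primeFactors, p + 2 ≤ q ↔ q ≠ p ∧ p ≤ q := fun q hq => by
    have := Nat.odd_iff.mp (hN.of_dvd_nat (Nat.dvd_of_mem_primeFactors hq))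
    have := Nat.odd_iff.mp hp
    omega
  ext q
  simp only [mem_filter, mem_erase]
  exact ⟨fun ⟨hq, h⟩ => ⟨((key q hq).1 h).1, hq, ((key q hq).1 h).2⟩,
    fun ⟨hne, hq, h⟩ => ⟨hq, (key q hq).2 ⟨hne, h⟩⟩⟩

/-- `N` is reachable from the state `(k, p, P, lam)` of `search`. -/
structure Consistent (N k p P lam : ℕ) : Prop where
  mul_prod_eq : P * ∏ q ∈ N.primeFactors with p ≤ q, q = N
  card_eq : #{q ∈ N.primeFactors | p ≤ q} = k
  dvd_sub_one : lam ∣ N - 1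

namespace Consistent

variable {N k p P lam : ℕ}

theorem init (hN : Odd N) (hsq : Squarefree N) : Consistent N #N.primeFactors 3 1 1 := by
  have hfilter : {q ∈ N.primeFactors | 3 ≤ q} = N.primeFactors := by
    refine filter_true_of_mem fun q hq => ?_
    have := (Nat.prime_of_mem_primeFactors hq).two_le
    have := Nat.odd_iff.mp (hN.of_dvd_nat (Nat.dvd_of_mem_primeFactors hq))
    omega
  refine ⟨?_, by rw [hfilter], one_dvd _⟩
  rw [hfilter, one_mul, Nat.prod_primeFactors_of_squarefree hsq]

theorem coprime (h : Consistent N k p P lam) (hN : N ≠ 0) : P.Coprime lam :=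
  (((Nat.coprime_self_sub_right (by omega)).mpr (Nat.coprime_one_right N)).coprime_dvd_left
    (Dvd.intro _ h.mul_prod_eq)).coprime_dvd_right h.dvd_sub_one

theorem mul_pow_le (h : Consistent N k p P lam) : P * p ^ k ≤ N :=
  calc P * p ^ k = P * p ^ #{q ∈ N.primeFactors | p ≤ q} := by rw [h.card_eq]
    _ ≤ P * ∏ q ∈ N.primeFactors with p ≤ q, q :=
      Nat.mul_le_mul_left _ (pow_card_le_prod _ _ _ fun _ hq => (mem_filter.mp hq).2)
    _ = N := h.mul_prod_eq

theorem of_notMem (h : Consistent N k p P lam) (hN : Odd N) (hp : Odd p)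
    (hpN : p ∉ N.primeFactors) : Consistent N k (p + 2) P lam := by
  have hfilter : {q ∈ N.primeFactors | p + 2 ≤ q} = {q ∈ N.primeFactors | p ≤ q} := by
    rw [primeFactors_filter_add_two_le hN hp,
      erase_eq_of_notMem fun hp' => hpN (mem_filter.mp hp').1]
  exact ⟨hfilter ▸ h.mul_prod_eq, hfilter ▸ h.card_eq, h.dvd_sub_one⟩

theorem of_mem (h : Consistent N k p P lam) (hN : Odd N) (hp : Odd p)
    (hpN : p ∈ N.primeFactors) (hpN' : p - 1 ∣ N - 1) :
    Consistent N (k - 1) (p + 2) (P * p) (lam.lcm (p - 1)) := by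
  have hmem : p ∈ {q ∈ N.primeFactors | p ≤ q} := mem_filter.mpr ⟨hpN, le_rfl⟩
  refine ⟨?_, ?_, Nat.lcm_dvd h.dvd_sub_one hpN'⟩
  · rw [primeFactors_filter_add_two_le hN hp, mul_assoc, mul_prod_erase _ (fun q => q) hmem,
      h.mul_prod_eq]
  · rw [primeFactors_filter_add_two_le hN hp, card_erase_of_mem hmem, h.card_eq]

theorem exists_mul_eq (h : Consistent N 1 p P lam) :
    ∃ q ∈ N.primeFactors, p ≤ q ∧ P * q = N := by
  obtain ⟨q, hq⟩ := card_eq_one.mp h.card_eq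
  have hmem := mem_filter.mp (hq ▸ mem_singleton_self q)
  exact ⟨q, hmem.1, hmem.2, by simpa [hq] using h.mul_prod_eq⟩

end Consistent

theorem search_sound {B N : ℕ} (hN : Odd N) (hNB : N < B)
    (hK : ∀ q ∈ N.primeFactors, q - 1 ∣ N - 1) : ∀ {fuel k p P lam : ℕ},
    search B fuel k p P lam = true → Odd p → Consistent N k p P lam → False
  | 0, _, _, _, _, hs, _, _ => Bool.false_ne_true hs
  | fuel + 1, k, p, P, lam, hs, hp, h => by
    have hN0 : N ≠ 0 := by rintro rfl; simp at hN
    have hp2 : Odd (p + 2) := hp.add_even even_two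
    rw [search] at hs
    split_ifs at hs with hk
    · subst hk
      obtain ⟨q, hq, hpq, hPq⟩ := h.exists_mul_eq
      have hP : 0 < P := Nat.pos_of_ne_zero fun hP => hN0 (by simp [← hPq, hP])
      refine noKorseltLastPrime_sound (h.coprime hN0) (Nat.prime_of_mem_primeFactors hq)
        (hN.of_dvd_nat (Nat.dvd_of_mem_primeFactors hq)) ?_ (hPq ▸ hK q hq) hs hp hpq ?_
      · exact hPq ▸ ((Nat.modEq_iff_dvd' (by omega)).mpr h.dvd_sub_one).symm
      · rw [Nat.le_div_iff_mul_le hP, mul_comm]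
        omega
    · simp only [Bool.or_eq_true, Bool.and_eq_true, decide_eq_true_eq] at hs
      rcases hs with hB | ⟨hA, hrest⟩
      · have := h.mul_pow_le
        omega
      by_cases hpN : p ∈ N.primeFactors
      · have h' := h.of_mem hN hp hpN (hK p hpN)
        simp [isOddPrime_eq_true (Nat.prime_of_mem_primeFactors hpN) hp,
          Nat.Coprime.gcd_eq_one (h'.coprime hN0)] at hA
        exact search_sound hN hNB hK hA hp2 h'
      · exact search_sound hN hNB hK hrest hp2 (h.of_notMem hN hp hpN)

theorem le_of_search {B fuel k N : ℕ} (hs : search B fuel k 3 1 1 = true)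
    (hk : #N.primeFactors = k) (hN : Odd N) (hsq : Squarefree N)
    (hK : ∀ q ∈ N.primeFactors, q - 1 ∣ N - 1) : B ≤ N := by
  by_contra! hNB
  exact search_sound hN hNB hK hs (by decide) (hk ▸ Consistent.init hN hsq)

set_option maxRecDepth 100000 in
theorem search_eq_true : search 232250619601 100000 8 3 1 1 = true := by decide

end KorseltSearch

theorem odd_of_sub_one_dvd {N p : ℕ} (hp : p ∈ N.primeFactors) (hp2 : p ≠ 2)
    (h : p - 1 ∣ N - 1) : Odd N := by
  have hpodd := Nat.odd_iff.mp ((Nat.prime_of_mem_primeFactors hp).odd_of_ne_two hp2)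
  have hN := (Nat.mem_primeFactors.mp hp).2.2
  have h2 : 2 ∣ N - 1 := (by omega : 2 ∣ p - 1).trans h
  rw [Nat.odd_iff]
  omega

theorem carmichael_smallest_with_8_prime_factors :
    IsCarmichael 232250619601 ∧ (Nat.primeFactors 232250619601).card = 8 ∧
      ∀ N : ℕ, IsCarmichael N → N.primeFactors.card = 8 → 232250619601 ≤ N := by
  have hfactors : (232250619601 : ℕ).primeFactors = {7, 11, 13, 17, 31, 37, 73, 163} := by
    simp [← Nat.toFinset_factors]
  refine ⟨isCarmichael_iff_korselt.mpr ⟨by norm_num, by norm_num, ?_, ?_⟩,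
    by rw [hfactors]; rfl, ?_⟩
  · rw [Nat.squarefree_iff_nodup_primeFactorsList (by norm_num)]
    simp
  · rw [hfactors]
    decide
  · intro N hN hcard
    obtain ⟨-, -, hsq, hK⟩ := isCarmichael_iff_korselt.mp hN
    obtain ⟨p, hp, hp2⟩ := exists_mem_ne (by omega : 1 < #N.primeFactors) 2
    exact KorseltSearch.le_of_search KorseltSearch.search_eq_true hcard
      (odd_of_sub_one_dvd hp hp2 (hK p hp)) hsq hK
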